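/- Let f : X → Y and g : Y → Z be morphisms of schemes with g étale. If the composite g ∘ f has preconnected geometric fibers (for every algebraically closed field K and every morphism v : Spec K → Z the underlying topological space of X ×_{Z, v} Spec K is preconnected), then f has preconnected geometric fibers. -/

import Mathlib

/-!
Let `v = y ≫ g`. The base change `Y ×[Z] Spec K ⟶ Spec K` of `g` is étale over a point, hence
its source is discrete, and `y` defines a section `s` of it. Since `X ×[Y] Spec K` (via `y`) is
the base change of `X ×[Z] Spec K ⟶ Y ×[Z] Spec K` along `s`, it embeds into the preconnected
fiber `X ×[Z] Spec K` of `f ≫ g` with clopen image, and so is itself preconnected.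
-/

open AlgebraicGeometry CategoryTheory CategoryTheory.Limits

universe u

theorem Topology.IsEmbedding.preconnectedSpace_of_isClopen_range {α β : Type*}
    [TopologicalSpace α] [TopologicalSpace β] [PreconnectedSpace β] {f : α → β}
    (hf : IsEmbedding f) (hrange : IsClopen (Set.range f)) : PreconnectedSpace α := by
  rw [preconnectedSpace_iff_univ, ← hf.isInducing.isPreconnected_image, Set.image_univ]
  rcases isClopen_iff.mp hrange with h | h
  · rw [h]; exact isPreconnected_empty
  · rw [h]; exact isPreconnected_univ

namespace AlgebraicGeometry

instance Etale.locallyQuasiFinite {X Y : Scheme.{u}} (f : X ⟶ Y) [Etale f] :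
    LocallyQuasiFinite f := by
  rw [HasRingHomProperty.iff_appLE (P := @LocallyQuasiFinite)]
  intro U V e
  have := HasRingHomProperty.appLE @Etale f ‹_› U V e
  algebraize [(f.appLE U V e).hom]
  exact RingHom.quasiFinite_algebraMap.mpr inferInstance

theorem Scheme.Hom.discreteTopology {X Y : Scheme.{u}} (f : X ⟶ Y) [LocallyQuasiFinite f]
    [DiscreteTopology Y] : DiscreteTopology X := by
  simpa [isDiscrete_univ_iff] using f.isDiscrete_preimage (isDiscrete_univ_iff.mpr ‹_›)

theorem Scheme.preconnectedSpace_of_iso {X Y : Scheme.{u}} (e : X ≅ Y) [PreconnectedSpace X] :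
    PreconnectedSpace Y :=
  e.hom.homeomorph.surjective.denseRange.preconnectedSpace e.hom.continuous

theorem IsImmersion.of_comp_eq_id {X Y : Scheme.{u}} {s : X ⟶ Y} {p : Y ⟶ X}
    (h : s ≫ p = 𝟙 X) : IsImmersion s :=
  have : IsImmersion (s ≫ p) := h ▸ inferInstance
  .of_comp s p

theorem preconnectedSpace_pullback_of_isClopen_range {X Y T : Scheme.{u}} (f : X ⟶ Y)
    (i : T ⟶ Y) [IsImmersion i] [PreconnectedSpace X] (hi : IsClopen (Set.range i)) :
    PreconnectedSpace ↥(pullback f i) :=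
  (pullback.fst f i).isEmbedding.preconnectedSpace_of_isClopen_range <| by
    rw [Scheme.Pullback.range_fst]
    exact hi.preimage f.continuous

end AlgebraicGeometry

/-- If `g : Y ⟶ Z` is étale and the composite `f ≫ g` has preconnected geometric fibers,
then `f : X ⟶ Y` has preconnected geometric fibers. -/
theorem preconnected_geometric_fibers_of_comp_of_etale
    {X Y Z : Scheme.{u}} (f : X ⟶ Y) (g : Y ⟶ Z) [Etale g]
    (hgf : ∀ (K : Type u) [Field K] [IsAlgClosed K]
      (v : Spec (CommRingCat.of K) ⟶ Z), PreconnectedSpace ↥(pullback (f ≫ g) v)) :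
    ∀ (K : Type u) [Field K] [IsAlgClosed K]
      (y : Spec (CommRingCat.of K) ⟶ Y), PreconnectedSpace ↥(pullback f y) := by
  intro K _ _ y
  let s : Spec (CommRingCat.of K) ⟶ pullback g (y ≫ g) := pullback.lift y (𝟙 _) (by simp)
  have : IsImmersion s := IsImmersion.of_comp_eq_id (pullback.lift_snd _ _ _)
  have : DiscreteTopology ↥(pullback g (y ≫ g)) := (pullback.snd g (y ≫ g)).discreteTopology
  have := hgf K (y ≫ g)
  have : PreconnectedSpace ↥(pullback f (pullback.fst g (y ≫ g))) :=
    Scheme.preconnectedSpace_of_iso (pullbackRightPullbackFstIso g (y ≫ g) f).symm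
  have := preconnectedSpace_pullback_of_isClopen_range
    (pullback.snd f (pullback.fst g (y ≫ g))) s (isClopen_discrete _)
  exact Scheme.preconnectedSpace_of_iso
    (pullbackLeftPullbackSndIso f _ s ≪≫ pullback.congrHom rfl (pullback.lift_fst _ _ _))
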